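/- Fix integers d ≥ 2, b ≥ 3, a nonempty proper set A ⊊ {0,...,b−1}, and 1 ≤ m ≤ d; let N = Σ_{i=0}^{m−1} C(d−1, i)·|A|^i·(b−|A|)^{d−i−1}. For each integer p of the form p = λb^k + Σ_{j=0}^{k−1} a_j b^j with all a_j ∈ A, the hyperplane {(x_1,...,x_d) ∈ V_{k'} : x_1 = p} of Γ_{k'}(d,b,A,m) (for any k' with b^{k'} > p) contained in a cube of side b^{k+1} meets at most (b^{d−1}/(b−|A|)^{d−1})·N^{k+1} vertices of Γ_{k'}(d,b,A,m) lying in that cube; equivalently, the number of (x_2,...,x_d) ∈ [0,b^{k+1})^{d−1} such that (p mod b^{k+1}, x_2,...,x_d) has at most m coordinates with an A-digit in any common position is at most (b/(b−|A|))^{d−1}·N^{k+1}. -/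

import Mathlib

open scoped Classical

/-- Reachability within the subgraph of `X` induced on a vertex set `s`. -/
def SimpleGraph.ReachIn {V : Type*} (X : SimpleGraph V) (s : Set V) (v w : V) : Prop :=
  ∃ (hv : v ∈ s) (hw : w ∈ s), (X.induce s).Reachable ⟨v, hv⟩ ⟨w, hw⟩

/-- The vertex set of the connected component of `v` in the subgraph of `X` induced on `s`
(empty if `v ∉ s`). -/
def SimpleGraph.compIn {V : Type*} (X : SimpleGraph V) (s : Set V) (v : V) : Set V :=
  {w | X.ReachIn s v w}

/-- `T` is a vertex set witnessing `cut¹ᐟ²` for the subgraph of `X` induced on the finite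
vertex set `G`: after removing `T` from `G`, every connected component has at most
`|G|/2` vertices. -/
def IsHalfCutSet {V : Type*} (X : SimpleGraph V) (G T : Finset V) : Prop :=
  T ⊆ G ∧ ∀ v : V, 2 * (X.compIn (↑(G \ T)) v).ncard ≤ G.card

/-- `cut¹ᐟ²` of the subgraph of `X` induced on the finite vertex set `G`: the least size of
a vertex set whose removal leaves all connected components of size at most `|G|/2`. -/
noncomputable def cutHalf {V : Type*} (X : SimpleGraph V) (G : Finset V) : ℕ :=
  sInf {t | ∃ T : Finset V, IsHalfCutSet X G T ∧ T.card = t}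

/-- The `1/2`-separation profile of `X`, over finite subgraphs with vertex set inside `W`. -/
noncomputable def sepHalf {V : Type*} (X : SimpleGraph V) (W : Set V) (n : ℕ) : ℕ :=
  sSup {c | ∃ G : Finset V, ↑G ⊆ W ∧ G.card ≤ n ∧ c = cutHalf X G}

/-- The `i`-th digit of `x` in base `b`. -/
def digit (b i x : ℕ) : ℕ := x / b ^ i % b

/-- Membership in the vertex set `V_k` of `Γ_k(d,b,A,m)`: all coordinates lie in `[0, b^k)`
and at every digit position `j < k`, at most `m` coordinates have their `j`-th base-`b`
digit in `A`. -/
def GenMem (d b : ℕ) (A : Finset ℕ) (m k : ℕ) (x : Fin d → ℕ) : Prop :=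
  (∀ i, x i < b ^ k) ∧
    ∀ j < k, (Finset.univ.filter fun i : Fin d => digit b j (x i) ∈ A).card ≤ m

/-- The vertex set of `S(d,b,A,m) = ⋃ₖ Γ_k(d,b,A,m)`. -/
def GenS (d b : ℕ) (A : Finset ℕ) (m : ℕ) : Set (Fin d → ℕ) :=
  {x | ∃ k, GenMem d b A m k x}

/-- The infinite graph `S(d,b,A,m)`, with edges between valid points at `ℓ¹`-distance 1. -/
def GenGraph (d b : ℕ) (A : Finset ℕ) (m : ℕ) : SimpleGraph (Fin d → ℕ) where
  Adj x y := x ∈ GenS d b A m ∧ y ∈ GenS d b A m ∧ (∑ i, |(x i : ℤ) - y i|) = 1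
  symm := by
    constructor
    rintro x y ⟨hx, hy, h⟩
    refine ⟨hy, hx, ?_⟩
    rw [← h]
    exact Finset.sum_congr rfl fun i _ => abs_sub_comm _ _
  loopless := by constructor; rintro x ⟨-, -, h⟩; simp at h

/-- The vertex set of `Γ_k(d,b,A,m)`. -/
noncomputable def GenGammaV (d b : ℕ) (A : Finset ℕ) (m k : ℕ) : Finset (Fin d → ℕ) :=
  (Fintype.piFinset fun _ : Fin d => Finset.range (b ^ k)).filter (GenMem d b A m k)

/-- The full line of length `b^k` through `x` in coordinate direction `i` is entirely
contained in `Γ_k(d,b,A,m)`. -/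
def GenLineComplete (d b : ℕ) (A : Finset ℕ) (m k : ℕ) (i : Fin d) (x : Fin d → ℕ) : Prop :=
  ∀ t < b ^ k, GenMem d b A m k (Function.update x i t)

/-- The set of points of the full line of length `b^k` through `x` in direction `i`. -/
def GenLineSet (d b k : ℕ) (i : Fin d) (x : Fin d → ℕ) : Set (Fin d → ℕ) :=
  {y | ∃ t < b ^ k, y = Function.update x i t}

/-- The vertex set of the complete-lines subgraph `C_k` of `Γ_k(d,b,A,m)`. -/
noncomputable def GenCkV (d b : ℕ) (A : Finset ℕ) (m k : ℕ) : Finset (Fin d → ℕ) :=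
  (GenGammaV d b A m k).filter fun x => ∃ i : Fin d, GenLineComplete d b A m k i x

/-- `N`, the number of single-column digit configurations of `d-1` coordinates with at
most `m-1` digits in `A`. -/
def genN (d b : ℕ) (A : Finset ℕ) (m : ℕ) : ℕ :=
  ∑ i ∈ Finset.range m, (d - 1).choose i * A.card ^ i * (b - A.card) ^ (d - i - 1)

/-!
An admissible `y` is determined by its base-`b` digit columns `j ≤ k` with the first coordinate
deleted. For `j < k` the first coordinate contributes the digit `a_j ∈ A`, so the other `d - 1`
digits of the column contain at most `m - 1` elements of `A`: exactly `N` columns qualify.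
The top column `k` is unconstrained, with `b^(d-1)` possibilities. So there are at most
`N^k b^(d-1)` such `y`, and `N ≥ (b - |A|)^(d-1)` (the term `i = 0` of `N`) turns this into
the bound.
-/

open Finset

section Digits

variable {b : ℕ}

lemma digit_succ (j x : ℕ) : digit b (j + 1) x = digit b j (x / b) := by
  rw [digit, digit, Nat.div_div_eq_div_mul, pow_succ']

lemma digit_lt (hb : 0 < b) (j x : ℕ) : digit b j x < b := Nat.mod_lt _ hb

lemma digit_mod_pow {j n : ℕ} (hjn : j < n) (x : ℕ) : digit b j (x % b ^ n) = digit b j x := by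
  obtain ⟨l, rfl⟩ := Nat.exists_eq_add_of_lt hjn
  rw [digit, digit, add_assoc, pow_add b j, Nat.mod_mul_right_div_self,
    Nat.mod_mod_of_dvd _ (dvd_pow_self b (by omega))]

lemma eq_of_digit_eq (hb : 0 < b) {n x y : ℕ} (hx : x < b ^ n) (hy : y < b ^ n)
    (h : ∀ j < n, digit b j x = digit b j y) : x = y := by
  induction n generalizing x y with
  | zero => simp_all
  | succ n ih =>
    have hdiv : x / b = y / b := by
      refine ih ?_ ?_ fun j hj => ?_
      · rwa [Nat.div_lt_iff_lt_mul hb, ← pow_succ]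
      · rwa [Nat.div_lt_iff_lt_mul hb, ← pow_succ]
      · simpa only [digit_succ] using h (j + 1) (by omega)
    have hmod : x % b = y % b := by simpa [digit] using h 0 (by omega)
    rw [← Nat.mod_add_div x b, ← Nat.mod_add_div y b, hdiv, hmod]

lemma digit_mul_pow_add_sum {k : ℕ} {a : ℕ → ℕ} (ha : ∀ j < k, a j < b) (c : ℕ) {j : ℕ}
    (hj : j < k) : digit b j (c * b ^ k + ∑ i ∈ range k, a i * b ^ i) = a j := by
  induction k generalizing a j with
  | zero => omega
  | succ k ih =>
    have hexp : c * b ^ (k + 1) + ∑ i ∈ range (k + 1), a i * b ^ i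
        = a 0 + b * (c * b ^ k + ∑ i ∈ range k, a (i + 1) * b ^ i) := by
      rw [sum_range_succ', mul_add, mul_sum]
      ring_nf
    have hb : 0 < b := (Nat.zero_le _).trans_lt (ha 0 (by omega))
    rw [hexp]
    cases j with
    | zero => simp [digit, Nat.mod_eq_of_lt (ha 0 (by omega))]
    | succ j =>
      rw [digit_succ, Nat.add_mul_div_left _ _ hb, Nat.div_eq_of_lt (ha 0 (by omega)), zero_add]
      exact ih (fun i hi => ha (i + 1) (by omega)) (by omega)

end Digits

section Columns

variable {ι α : Type*} [Fintype ι] [DecidableEq ι] [DecidableEq α] {A B : Finset α}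

lemma filter_mem_eq_piFinset_ite (hAB : A ⊆ B) (S : Finset ι) :
    {c ∈ Fintype.piFinset fun _ : ι => B | ({i | c i ∈ A} : Finset ι) = S}
      = Fintype.piFinset fun i => if i ∈ S then A else B \ A := by
  ext c
  simp only [mem_filter, Fintype.mem_piFinset]
  constructor
  · rintro ⟨hB, rfl⟩ i
    by_cases hi : c i ∈ A <;> simp_all
  · intro hc
    refine ⟨fun i => ?_, ?_⟩
    · have := hc i
      split_ifs at this
      exacts [hAB this, (mem_sdiff.1 this).1]
    · ext i
      have := hc i
      split_ifs at this with hi <;> simp_all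

lemma card_filter_card_filter_mem_eq (hAB : A ⊆ B) (r : ℕ) :
    #{c ∈ Fintype.piFinset fun _ : ι => B | #{i | c i ∈ A} = r}
      = (Fintype.card ι).choose r * #A ^ r * (#B - #A) ^ (Fintype.card ι - r) := by
  rw [card_eq_sum_card_fiberwise (f := fun c => ({i | c i ∈ A} : Finset ι))
    (t := powersetCard r univ)]
  · rw [sum_congr rfl fun S hS => ?_, sum_const, card_powersetCard, card_univ, smul_eq_mul,
      mul_assoc]
    have hS : #S = r := (mem_powersetCard.1 hS).2
    rw [filter_filter, filter_congr fun c _ => and_iff_right_of_imp fun h => h ▸ hS,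
      filter_mem_eq_piFinset_ite hAB, Fintype.card_piFinset,
      prod_congr rfl fun i _ => apply_ite card (i ∈ S) A (B \ A), prod_ite, prod_const, prod_const,
      card_sdiff_of_subset hAB, filter_mem_eq_inter, univ_inter, hS, filter_not, card_univ_sdiff,
      filter_mem_eq_inter, univ_inter, hS]
  · intro c hc
    simp_all [mem_powersetCard]

lemma card_filter_card_filter_mem_lt (hAB : A ⊆ B) (m : ℕ) :
    #{c ∈ Fintype.piFinset fun _ : ι => B | #{i | c i ∈ A} < m}
      = ∑ r ∈ range m, (Fintype.card ι).choose r * #A ^ r * (#B - #A) ^ (Fintype.card ι - r) := by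
  rw [card_eq_sum_card_fiberwise (f := fun c => #{i | c i ∈ A}) (t := range m)]
  · refine sum_congr rfl fun r hr => ?_
    rw [filter_filter, ← card_filter_card_filter_mem_eq hAB]
    exact congrArg card (filter_congr fun c _ => and_iff_right_of_imp fun h => h ▸ mem_range.1 hr)
  · intro c hc
    simp_all

end Columns

lemma ncard_hyperplane_le {b n k m q : ℕ} {A : Finset ℕ} (hb : 0 < b) (hA : A ⊆ range b)
    (hq : ∀ j < k, digit b j q ∈ A) :
    {y : Fin (n + 1) → ℕ | y 0 = q ∧ (∀ i, i ≠ 0 → y i < b ^ (k + 1)) ∧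
        ∀ j < k + 1, #{i | digit b j (y i) ∈ A} ≤ m}.ncard
      ≤ (∑ r ∈ range m, n.choose r * #A ^ r * (b - #A) ^ (n - r)) ^ k * b ^ n := by
  set C : Finset (Fin n → ℕ) := {c ∈ Fintype.piFinset fun _ => range b | #{i | c i ∈ A} < m}
  have hC : #C = ∑ r ∈ range m, n.choose r * #A ^ r * (b - #A) ^ (n - r) := by
    simpa using card_filter_card_filter_mem_lt (ι := Fin n) hA m
  set D : Fin (k + 1) → Finset (Fin n → ℕ) := fun j =>
    if (j : ℕ) < k then C else Fintype.piFinset fun _ => range b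
  have hD : #(Fintype.piFinset D) = #C ^ k * b ^ n := by
    simp [D, Fintype.card_piFinset, Fin.prod_univ_castSucc]
  rw [← hC, ← hD, ← Set.ncard_coe_finset]
  refine Set.ncard_le_ncard_of_injOn (fun y j i => digit b j (y i.succ)) ?_ ?_
  · rintro y ⟨hy0, -, hy⟩
    simp only [Fintype.coe_piFinset, Set.mem_pi, Set.mem_univ, forall_const]
    intro j
    have hdigit : ∀ i : Fin n, digit b j (y i.succ) ∈ range b :=
      fun i => mem_range.2 (digit_lt hb _ _)
    simp only [D, C]
    split_ifs with hj
    · have := hy j (by omega)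
      rw [Fin.card_filter_univ_succ, if_pos (hy0 ▸ hq j hj)] at this
      exact mem_filter.2 ⟨Fintype.mem_piFinset.2 hdigit, this⟩
    · exact Fintype.mem_piFinset.2 hdigit
  · rintro y ⟨hy0, hy, -⟩ y' ⟨hy0', hy', -⟩ h
    funext i
    cases i using Fin.cases with
    | zero => rw [hy0, hy0']
    | succ i =>
      exact eq_of_digit_eq hb (hy _ (Fin.succ_ne_zero i)) (hy' _ (Fin.succ_ne_zero i))
        fun j hj => congrFun (congrFun h ⟨j, hj⟩) i

lemma sub_card_pow_le_genN {d b m : ℕ} (A : Finset ℕ) (hm : 1 ≤ m) :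
    (b - #A) ^ (d - 1) ≤ genN d b A m := by
  unfold genN
  simpa using single_le_sum (f := fun i => (d - 1).choose i * #A ^ i * (b - #A) ^ (d - i - 1))
    (fun i _ => Nat.zero_le _) (mem_range.2 hm)

lemma pow_mul_pow_le_div_pow_mul_pow {B c N : ℝ} {n : ℕ} (k : ℕ) (hB : 0 ≤ B) (hc : 0 < c)
    (hN : c ^ n ≤ N) : N ^ k * B ^ n ≤ (B / c) ^ n * N ^ (k + 1) := by
  have hN0 : 0 ≤ N := (pow_nonneg hc.le n).trans hN
  calc N ^ k * B ^ n = (B / c) ^ n * N ^ k * c ^ n := by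
        rw [mul_right_comm, div_pow, div_mul_cancel₀ _ (pow_ne_zero n hc.ne'), mul_comm]
    _ ≤ (B / c) ^ n * N ^ k * N := by gcongr
    _ = (B / c) ^ n * N ^ (k + 1) := by ring

/-- For `p = λ·b^k + Σ_{j<k} a_j·b^j` with all `a_j ∈ A`, the number of tuples
`(x₂,…,x_d) ∈ [0,b^(k+1))^(d-1)` such that `(p mod b^(k+1), x₂,…,x_d)` has at most `m`
coordinates with an `A`-digit at any common position is at most
`(b/(b-|A|))^(d-1) · N^(k+1)`. -/
theorem hyperplane_count (d b m k : ℕ) (hd : 2 ≤ d) (hb : 3 ≤ b)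
    (A : Finset ℕ) (hA : A ⊂ Finset.range b)
    (hm₁ : 1 ≤ m)
    (lam : ℕ) (a : ℕ → ℕ) (ha : ∀ j < k, a j ∈ A)
    (p : ℕ) (hp : p = lam * b ^ k + ∑ j ∈ Finset.range k, a j * b ^ j) :
    ({y : Fin d → ℕ | y ⟨0, by omega⟩ = p % b ^ (k + 1) ∧
        (∀ i : Fin d, i ≠ ⟨0, by omega⟩ → y i < b ^ (k + 1)) ∧
        ∀ j < k + 1,
          (Finset.univ.filter fun i : Fin d => digit b j (y i) ∈ A).card ≤ m}.ncard : ℝ)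
      ≤ ((b : ℝ) / ((b - A.card : ℕ) : ℝ)) ^ (d - 1) * (genN d b A m : ℝ) ^ (k + 1) := by
  obtain ⟨n, rfl⟩ : ∃ n, d = n + 1 := ⟨d - 1, by omega⟩
  have hdigit : ∀ j < k, digit b j (p % b ^ (k + 1)) ∈ A := fun j hj => by
    rw [digit_mod_pow (by omega), hp,
      digit_mul_pow_add_sum (fun i hi => mem_range.1 (hA.subset (ha i hi))) lam hj]
    exact ha j hj
  have hN : genN (n + 1) b A m = ∑ r ∈ range m, n.choose r * #A ^ r * (b - #A) ^ (n - r) := by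
    refine sum_congr rfl fun r _ => ?_
    rw [Nat.add_sub_cancel, Nat.sub_right_comm, Nat.add_sub_cancel]
  have hcount := ncard_hyperplane_le (n := n) (m := m) (by omega) hA.subset hdigit
  rw [← hN] at hcount
  have hAb : #A < b := by simpa using card_lt_card hA
  have hNlow : (b - #A) ^ n ≤ genN (n + 1) b A m :=
    sub_card_pow_le_genN (d := n + 1) A hm₁
  simp only [Fin.mk_zero, Nat.add_sub_cancel]
  calc _ ≤ ((genN (n + 1) b A m ^ k * b ^ n : ℕ) : ℝ) := by exact_mod_cast hcount
    _ ≤ _ := by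
      push_cast
      exact pow_mul_pow_le_div_pow_mul_pow k (Nat.cast_nonneg b)
        (by exact_mod_cast Nat.sub_pos_of_lt hAb) (by exact_mod_cast hNlow)
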